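/- arXiv:2409.00328 — 2 statements merged into one kernel-verified Lean document; each statement's English description precedes it below -/
import Mathlib

section
/- Let κ be a characteristic kernel induced by a semimetric ρ of strong negative type on ℝ^d, let ξ = {z₁,…,z_n} ⊂ ℝ^d be a finite support set, and let Π : P(ℝ^d) → Δ(ξ) be the MMD projection Πp = argmin_{q∈Δ(ξ)} MMD(p,q). Then for any probability measure p and any partition P of the support of p into n measurable cells θ₁,…,θ_n with z_i ∈ θ_i, MMD²(Πp, p) ≤ max_i sup_{y₁,y₂ ∈ θ_i} ρ(y₁, y₂). -/
open MeasureTheory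

/-- Approximation quality of the categorical MMD projection. Let `k` be the feature map of
a kernel induced by a semimetric `ρ` (so `‖k y₁ - k y₂‖² = ρ(y₁,y₂)`), let
`ξ = {z 1, …, z n}` be a finite support set, and let `w` be the weight vector of the MMD
projection of `p` onto the simplex `Δ(ξ)` (it minimizes `‖∑ w_i k(z_i) - μ_p‖`). Then for
any partition `θ` of the support of `p` into `n` cells with `z i ∈ θ i`,
`MMD²(Πp, p) ≤ max_i sup_{y₁,y₂ ∈ θ i} ρ(y₁,y₂)`. -/
theorem categorical_mmd_projection_error {n : ℕ} (hn : 0 < n)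
    {E : Type*} [MeasurableSpace E]
    {H : Type*} [NormedAddCommGroup H] [InnerProductSpace ℝ H] [CompleteSpace H]
    (ρ : E → E → ℝ) (k : E → H)
    (hiso : ∀ y₁ y₂, ‖k y₁ - k y₂‖ ^ 2 = ρ y₁ y₂)
    (z : Fin n → E) (θ : Fin n → Set E)
    (hmeas : ∀ i, MeasurableSet (θ i))
    (hdisj : Pairwise (Function.onFun Disjoint θ))
    (hz : ∀ i, z i ∈ θ i)
    (hz' : ∀ i j, z j ∈ θ i → j = i)
    (p : Measure E) [IsProbabilityMeasure p]
    (hsupp : p (⋃ i, θ i)ᶜ = 0)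
    (hint : Integrable k p)
    (w : Fin n → ℝ) (hw0 : ∀ i, 0 ≤ w i) (hw1 : ∑ i, w i = 1)
    (hopt : ∀ v : Fin n → ℝ, (∀ i, 0 ≤ v i) → (∑ i, v i = 1) →
      ‖(∑ i, w i • k (z i)) - ∫ y, k y ∂p‖ ≤ ‖(∑ i, v i • k (z i)) - ∫ y, k y ∂p‖)
    (hbdd : ∀ i, BddAbove {r : ℝ | ∃ y₁ ∈ θ i, ∃ y₂ ∈ θ i, r = ρ y₁ y₂}) :
    ‖(∑ i, w i • k (z i)) - ∫ y, k y ∂p‖ ^ 2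
      ≤ ⨆ i, sSup {r : ℝ | ∃ y₁ ∈ θ i, ∃ y₂ ∈ θ i, r = ρ y₁ y₂} := by
  set S : Fin n → ℝ := fun i => sSup {r : ℝ | ∃ y₁ ∈ θ i, ∃ y₂ ∈ θ i, r = ρ y₁ y₂} with hS
  set M : ℝ := ⨆ i, S i with hMdef
  haveI : Nonempty (Fin n) := ⟨⟨0, hn⟩⟩
  have hSM : ∀ i, S i ≤ M := fun i => le_ciSup (Set.Finite.bddAbove (Set.finite_range S)) i
  have hρ : ∀ i, ∀ y₁ ∈ θ i, ∀ y₂ ∈ θ i, ρ y₁ y₂ ≤ M := fun i y₁ h₁ y₂ h₂ =>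
    (le_csSup (hbdd i) ⟨y₁, h₁, y₂, h₂, rfl⟩).trans (hSM i)
  have hM0 : 0 ≤ M := by
    have h1 := hρ ⟨0, hn⟩ _ (hz _) _ (hz _)
    have h0 : ρ (z ⟨0, hn⟩) (z ⟨0, hn⟩) = 0 := by rw [← hiso]; simp
    linarith
  have hnorm : ∀ i, ∀ y ∈ θ i, ‖k (z i) - k y‖ ≤ Real.sqrt M := by
    intro i y hy
    refine (Real.le_sqrt (norm_nonneg _) hM0).mpr ?_
    rw [hiso]; exact hρ i _ (hz i) _ hy
  -- the candidate weights
  set v : Fin n → ℝ := fun i => (p (θ i)).toReal with hv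
  have hfin : ∀ i, p (θ i) ≠ ⊤ := fun i => (measure_lt_top p _).ne
  have hU : MeasurableSet (⋃ i, θ i) := MeasurableSet.iUnion hmeas
  have hrestr : p.restrict (⋃ i, θ i) = p :=
    Measure.restrict_eq_self_of_ae_mem (mem_ae_iff.mpr hsupp)
  have hpU : p (⋃ i, θ i) = 1 := by
    have := measure_add_measure_compl (μ := p) hU
    rw [hsupp, add_zero, measure_univ] at this; exact this
  have hv0 : ∀ i, 0 ≤ v i := fun i => ENNReal.toReal_nonneg
  have hv1 : ∑ i, v i = 1 := by
    have hsum : p (⋃ i, θ i) = ∑ i, p (θ i) := by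
      rw [measure_iUnion hdisj hmeas, tsum_fintype]
    have := ENNReal.toReal_sum (s := Finset.univ) (f := fun i => p (θ i))
      (fun i _ => hfin i)
    rw [hv]; rw [← this, ← hsum, hpU, ENNReal.toReal_one]
  -- decompose the integral
  have hμ : (∫ y, k y ∂p) = ∑ i, ∫ y in θ i, k y ∂p := by
    have h1 : (∫ y, k y ∂p) = ∫ y in ⋃ i, θ i, k y ∂p := by rw [hrestr]
    rw [h1, integral_iUnion hmeas hdisj hint.integrableOn, tsum_fintype]
  have hconst : ∀ i, v i • k (z i) = ∫ _ in θ i, k (z i) ∂p := by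
    intro i; rw [setIntegral_const]; rfl
  have hdiff : (∑ i, v i • k (z i)) - (∫ y, k y ∂p)
      = ∑ i, ∫ y in θ i, (k (z i) - k y) ∂p := by
    rw [hμ, ← Finset.sum_sub_distrib]
    refine Finset.sum_congr rfl fun i _ => ?_
    rw [hconst i, ← integral_sub ((integrableOn_const_iff (C := k (z i))).mpr (Or.inr (measure_lt_top p _)))
      hint.integrableOn]
  have hbound : ∀ i, ‖∫ y in θ i, (k (z i) - k y) ∂p‖ ≤ Real.sqrt M * v i := by
    intro i
    exact norm_setIntegral_le_of_norm_le_const_ae' (measure_lt_top p _)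
      (Filter.Eventually.of_forall fun y hy => hnorm i y hy)
  have hVbound : ‖(∑ i, v i • k (z i)) - ∫ y, k y ∂p‖ ≤ Real.sqrt M := by
    rw [hdiff]
    calc ‖∑ i, ∫ y in θ i, (k (z i) - k y) ∂p‖
        ≤ ∑ i, ‖∫ y in θ i, (k (z i) - k y) ∂p‖ := norm_sum_le _ _
      _ ≤ ∑ i, Real.sqrt M * v i := Finset.sum_le_sum fun i _ => hbound i
      _ = Real.sqrt M := by rw [← Finset.mul_sum, hv1, mul_one]
  have hW : ‖(∑ i, w i • k (z i)) - ∫ y, k y ∂p‖ ≤ Real.sqrt M :=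
    (hopt v hv0 hv1).trans hVbound
  calc ‖(∑ i, w i • k (z i)) - ∫ y, k y ∂p‖ ^ 2
      ≤ Real.sqrt M ^ 2 := pow_le_pow_left₀ (norm_nonneg _) hW 2
    _ = M := Real.sq_sqrt hM0
end

section
/- Let κ be a characteristic kernel over a space Y with RKHS H. Then the function MMD(p, q) = ‖μ_p − μ_q‖_H defines a metric on the set S₁(Y) of all finite signed measures μ on Y with total mass μ(Y) = 1. In particular, for signed mass-1 measures p ≠ q, MMD(p,q) > 0. -/
open MeasureTheory

lemma signedMeasure_apply_jordan {Y : Type*} [MeasurableSpace Y] (p : SignedMeasure Y)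
    {s : Set Y} (hs : MeasurableSet s) :
    p s = (p.toJordanDecomposition.posPart s).toReal
          - (p.toJordanDecomposition.negPart s).toReal := by
  conv_lhs => rw [← p.toSignedMeasure_toJordanDecomposition]
  rw [JordanDecomposition.toSignedMeasure, VectorMeasure.sub_apply,
    Measure.toSignedMeasure_apply_measurable hs, Measure.toSignedMeasure_apply_measurable hs]
  rfl

/-- For a characteristic kernel (mean embedding injective on probability measures), the
MMD `‖μ_p - μ_q‖` is a metric on mass-1 signed measures; in particular it is strictly
positive for distinct signed measures of total mass 1. The mean embedding of a signed
measure is defined through its Jordan decomposition `p = p⁺ - p⁻`. -/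
theorem mmd_metric_on_signed_mass_one {Y : Type*} [MeasurableSpace Y]
    {H : Type*} [NormedAddCommGroup H] [InnerProductSpace ℝ H] [CompleteSpace H]
    (k : Y → H)
    (hbdd : ∀ μ : Measure Y, IsFiniteMeasure μ → Integrable k μ)
    (hchar : ∀ p q : Measure Y, IsProbabilityMeasure p → IsProbabilityMeasure q →
      (∫ y, k y ∂p) = (∫ y, k y ∂q) → p = q)
    (p q : SignedMeasure Y)
    (hp : p Set.univ = 1) (hq : q Set.univ = 1) (hpq : p ≠ q) :
    0 < ‖((∫ y, k y ∂p.toJordanDecomposition.posPart)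
            - ∫ y, k y ∂p.toJordanDecomposition.negPart)
        - ((∫ y, k y ∂q.toJordanDecomposition.posPart)
            - ∫ y, k y ∂q.toJordanDecomposition.negPart)‖ := by
  set pp := p.toJordanDecomposition.posPart with hpp
  set pn := p.toJordanDecomposition.negPart with hpn
  set qp := q.toJordanDecomposition.posPart with hqp
  set qn := q.toJordanDecomposition.negPart with hqn
  rw [norm_pos_iff, sub_ne_zero]
  intro heq
  -- the combined measures
  set μ : Measure Y := pp + qn with hμdef
  set ν : Measure Y := qp + pn with hνdef
  have hμfin : IsFiniteMeasure μ := by infer_instance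
  have hνfin : IsFiniteMeasure ν := by infer_instance
  -- integrals agree
  have hint : (∫ y, k y ∂μ) = ∫ y, k y ∂ν := by
    rw [hμdef, hνdef, integral_add_measure (hbdd pp inferInstance) (hbdd qn inferInstance),
      integral_add_measure (hbdd qp inferInstance) (hbdd pn inferInstance)]
    have := sub_eq_sub_iff_add_eq_add.mp heq
    linear_combination (norm := abel) this
  -- total masses agree and are positive
  have hmass_p : (pp Set.univ).toReal - (pn Set.univ).toReal = 1 := by
    rw [← signedMeasure_apply_jordan p MeasurableSet.univ]; exact hp
  have hmass_q : (qp Set.univ).toReal - (qn Set.univ).toReal = 1 := by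
    rw [← signedMeasure_apply_jordan q MeasurableSet.univ]; exact hq
  set c : ENNReal := μ Set.univ with hc
  have hμr : (μ Set.univ).toReal = (pp Set.univ).toReal + (qn Set.univ).toReal := by
    rw [hμdef, Measure.add_apply, ENNReal.toReal_add (measure_ne_top _ _) (measure_ne_top _ _)]
  have hνr : (ν Set.univ).toReal = (qp Set.univ).toReal + (pn Set.univ).toReal := by
    rw [hνdef, Measure.add_apply, ENNReal.toReal_add (measure_ne_top _ _) (measure_ne_top _ _)]
  have hmass : μ Set.univ = ν Set.univ := by
    have h1 : (μ Set.univ).toReal = (ν Set.univ).toReal := by rw [hμr, hνr]; linarith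
    exact (ENNReal.toReal_eq_toReal_iff' (measure_ne_top _ _) (measure_ne_top _ _)).mp h1
  have hcne : c ≠ 0 := by
    intro h0
    have : (μ Set.univ).toReal = 0 := by rw [← hc, h0]; simp
    have h1 : (0:ℝ) ≤ (pp Set.univ).toReal := ENNReal.toReal_nonneg
    have h2 : (0:ℝ) ≤ (qn Set.univ).toReal := ENNReal.toReal_nonneg
    have h3 : (0:ℝ) ≤ (pn Set.univ).toReal := ENNReal.toReal_nonneg
    linarith [hμr ▸ this]
  have hctop : c ≠ ⊤ := measure_ne_top _ _
  -- normalized probability measures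
  have hPprob : IsProbabilityMeasure (c⁻¹ • μ) :=
    ⟨by rw [Measure.smul_apply, smul_eq_mul, ← hc, ENNReal.inv_mul_cancel hcne hctop]⟩
  have hQprob : IsProbabilityMeasure (c⁻¹ • ν) :=
    ⟨by rw [Measure.smul_apply, smul_eq_mul, ← hmass, ← hc, ENNReal.inv_mul_cancel hcne hctop]⟩
  have hPQ : c⁻¹ • μ = c⁻¹ • ν := by
    apply hchar _ _ hPprob hQprob
    rw [integral_smul_measure, integral_smul_measure, hint]
  have hμν : μ = ν := by
    have := congrArg (fun m : Measure Y => c • m) hPQ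
    simpa [smul_smul, ENNReal.mul_inv_cancel hcne hctop] using this
  -- conclude p = q
  apply hpq
  ext s hs
  rw [signedMeasure_apply_jordan p hs, signedMeasure_apply_jordan q hs]
  have h1 : pp s + qn s = qp s + pn s := by
    have h0 : μ s = ν s := by rw [hμν]
    simpa [hμdef, hνdef, Measure.add_apply] using h0
  have h2 : (pp s).toReal + (qn s).toReal = (qp s).toReal + (pn s).toReal := by
    rw [← ENNReal.toReal_add (measure_ne_top _ _) (measure_ne_top _ _),
      ← ENNReal.toReal_add (measure_ne_top _ _) (measure_ne_top _ _), h1]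
  linarith
end
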